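/- (VE score rescaling) Let μ₀ ∈ ℝ^d, let Σ₀ be a symmetric positive definite d×d real matrix, let s > 0 (representing σ²(t) - σ²(0)), and let β > 0. Define p(x) = N(x; μ₀, Σ₀ + s I) and p^{(β)}(x) = N(x; μ₀, β⁻¹ Σ₀ + s I). Then for every x ∈ ℝ^d, ∇_x log p^{(β)}(x) = R^{VE} ∇_x log p(x), where R^{VE} = (s I + β⁻¹ Σ₀)⁻¹ (s I + Σ₀). -/

import Mathlib

/-! The log-density of `N(μ, A)` is a constant minus `½ ⟪y - μ, A⁻¹ (y - μ)⟫`, so its gradient is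
the score `-A⁻¹ (x - μ)`. Both scores are of this form, and `R^{VE}` maps the second to the first
because `(s I + Σ₀) (Σ₀ + s I)⁻¹ = I`. -/

open scoped RealInnerProductSpace Matrix

/-- The multivariate Gaussian density `N(x; μ, S)` on `ℝ^d`. -/
noncomputable def gaussianDensity {d : ℕ} (μ : EuclideanSpace ℝ (Fin d))
    (S : Matrix (Fin d) (Fin d) ℝ) (x : EuclideanSpace ℝ (Fin d)) : ℝ :=
  (2 * Real.pi) ^ (-(d : ℝ) / 2) * S.det ^ (-(1 : ℝ) / 2) *
    Real.exp (-(1 / 2 : ℝ) * ⟪x - μ, (Matrix.toEuclideanLin S⁻¹) (x - μ)⟫)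

theorem hasGradientAt_const_sub_half_inner_sub_apply_sub {E : Type*} [NormedAddCommGroup E]
    [InnerProductSpace ℝ E] [CompleteSpace E] {T : E →L[ℝ] E}
    (hT : (T : E →ₗ[ℝ] E).IsSymmetric) (c : ℝ) (μ x : E) :
    HasGradientAt (fun y => c - (1 / 2 : ℝ) * ⟪y - μ, T (y - μ)⟫) (-T (x - μ)) x := by
  have hsub : HasFDerivAt (fun y : E => y - μ) (ContinuousLinearMap.id ℝ E) x :=
    (hasFDerivAt_id x).sub_const μ
  rw [hasGradientAt_iff_hasFDerivAt]
  refine (((hsub.inner ℝ (T.hasFDerivAt.comp x hsub)).const_mul _).const_sub c).congr_fderiv ?_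
  ext h
  have hTsymm : ⟪x - μ, T h⟫ = ⟪T (x - μ), h⟫ := (hT (x - μ) h).symm
  simp only [ContinuousLinearMap.comp_id, neg_apply, smul_apply, Function.comp_apply,
    ContinuousLinearMap.comp_apply, ContinuousLinearMap.prod_apply,
    ContinuousLinearMap.id_apply, fderivInnerCLM_apply, hTsymm, real_inner_comm h, smul_eq_mul,
    map_neg, InnerProductSpace.toDual_apply_apply]
  ring

theorem log_gaussianDensity {d : ℕ} (μ : EuclideanSpace ℝ (Fin d))
    {A : Matrix (Fin d) (Fin d) ℝ} (hA : A.PosDef) (y : EuclideanSpace ℝ (Fin d)) :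
    Real.log (gaussianDensity μ A y) =
      Real.log ((2 * Real.pi) ^ (-(d : ℝ) / 2) * A.det ^ (-(1 : ℝ) / 2)) -
        (1 / 2 : ℝ) * ⟪y - μ, (Matrix.toEuclideanLin A⁻¹) (y - μ)⟫ := by
  have hnorm : 0 < (2 * Real.pi) ^ (-(d : ℝ) / 2) * A.det ^ (-(1 : ℝ) / 2) := by
    have := hA.det_pos
    positivity
  rw [gaussianDensity, Real.log_mul hnorm.ne' (Real.exp_ne_zero _), Real.log_exp]
  ring

theorem gradient_log_gaussianDensity {d : ℕ} (μ : EuclideanSpace ℝ (Fin d))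
    {A : Matrix (Fin d) (Fin d) ℝ} (hA : A.PosDef) (x : EuclideanSpace ℝ (Fin d)) :
    gradient (fun y => Real.log (gaussianDensity μ A y)) x =
      -Matrix.toEuclideanLin A⁻¹ (x - μ) := by
  let P := LinearMap.toContinuousLinearMap (Matrix.toEuclideanLin A⁻¹)
  have hP : (P : EuclideanSpace ℝ (Fin d) →ₗ[ℝ] _).IsSymmetric :=
    Matrix.isSymmetric_toEuclideanLin_iff.2 hA.inv.isHermitian
  simp_rw [log_gaussianDensity μ hA]
  exact (hasGradientAt_const_sub_half_inner_sub_apply_sub hP _ μ x).gradient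

/-- VE score rescaling: with `p = N(μ₀, Σ₀ + s I)` and
`p^{(β)} = N(μ₀, β⁻¹ Σ₀ + s I)`, for every `x`
`∇ log p^{(β)}(x) = R^{VE} ∇ log p(x)` where
`R^{VE} = (s I + β⁻¹ Σ₀)⁻¹ (s I + Σ₀)`. -/
theorem ve_score_rescaling {d : ℕ} (μ₀ : EuclideanSpace ℝ (Fin d))
    (S₀ : Matrix (Fin d) (Fin d) ℝ) (hS₀ : S₀.PosDef)
    (s : ℝ) (hs : 0 < s) (β : ℝ) (hβ : 0 < β) :
    ∀ x : EuclideanSpace ℝ (Fin d),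
      gradient (fun y =>
          Real.log (gaussianDensity μ₀
            (β⁻¹ • S₀ + s • (1 : Matrix (Fin d) (Fin d) ℝ)) y)) x
        = (Matrix.toEuclideanLin
            ((s • (1 : Matrix (Fin d) (Fin d) ℝ) + β⁻¹ • S₀)⁻¹ *
              (s • (1 : Matrix (Fin d) (Fin d) ℝ) + S₀)))
            (gradient (fun y =>
              Real.log (gaussianDensity μ₀
                (S₀ + s • (1 : Matrix (Fin d) (Fin d) ℝ)) y)) x) := by
  intro x
  have hsI : (s • (1 : Matrix (Fin d) (Fin d) ℝ)).PosDef := Matrix.PosDef.one.smul hs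
  have hC : (S₀ + s • (1 : Matrix (Fin d) (Fin d) ℝ)).PosDef := hS₀.add hsI
  rw [gradient_log_gaussianDensity μ₀ ((hS₀.smul (inv_pos.2 hβ)).add hsI),
    gradient_log_gaussianDensity μ₀ hC, map_neg, ← LinearMap.comp_apply,
    ← Matrix.toLpLin_mul_same, add_comm _ S₀, add_comm _ (β⁻¹ • S₀),
    Matrix.mul_nonsing_inv_cancel_right _ _ ((Matrix.isUnit_iff_isUnit_det _).1 hC.isUnit)]
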